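/- For every integer k ≥ 3, f(k) is at most the number of partitions α of k−1 satisfying α₁ = α₂. (The paper's injection sends a partition β of k all of whose parts are at least 3 to the conjugate of the partition obtained from β by removing one box from its last row.) -/

import Mathlib

namespace SquareKronecker

/-- The `i`-th largest part (1-indexed) of a partition of `n`, with the convention that
`nthPart α i = 0` when `i` exceeds the number of parts. -/
def nthPart {n : ℕ} (α : n.Partition) (i : ℕ) : ℕ :=
  ((α.parts.sort (· ≤ ·)).reverse).getD (i - 1) 0

/-- `ℓ₁ α`: the number of distinct part sizes occurring in the partition `α`. -/
def distinctParts {n : ℕ} (α : n.Partition) : ℕ :=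
  α.parts.toFinset.card

/-- `f k`: the number of partitions of `k` all of whose parts are at least `3`
(equivalently, with no parts equal to `1` or `2`). -/
def f (k : ℕ) : ℕ :=
  (Finset.univ.filter (fun α : k.Partition => ∀ p ∈ α.parts, 3 ≤ p)).card

/-! ### Auxiliary facts about Young diagrams -/

open YoungDiagram in
lemma sum_rowLens_eq_card (μ : YoungDiagram) : μ.rowLens.sum = μ.cells.card := by
  classical
  have h1 : μ.cells.card = ∑ i ∈ Finset.range (μ.colLen 0), μ.rowLen i := by
    rw [Finset.card_eq_sum_card_fiberwise (f := Prod.fst) (t := Finset.range (μ.colLen 0))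
      (fun c hc => by
        rw [Finset.mem_coe, Finset.mem_range, ← YoungDiagram.mem_iff_lt_colLen]
        exact μ.up_left_mem le_rfl (Nat.zero_le _) (by rwa [Finset.mem_coe, YoungDiagram.mem_cells] at hc))]
    refine Finset.sum_congr rfl fun i _ => ?_
    rw [μ.rowLen_eq_card]
    congr 1
  rw [h1, YoungDiagram.rowLens, ← Multiset.sum_coe]
  rfl

lemma card_transpose (μ : YoungDiagram) : μ.transpose.cells.card = μ.cells.card := by
  simp [YoungDiagram.transpose]

/-! ### The descending list of parts of a partition -/

/-- The parts of a partition as a weakly decreasing list. -/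
def descList {n : ℕ} (p : n.Partition) : List ℕ :=
  (p.parts.sort (· ≤ ·)).reverse

lemma descList_sorted {n : ℕ} (p : n.Partition) : (descList p).Pairwise (· ≥ ·) := by
  rw [descList, List.pairwise_reverse]
  exact Multiset.pairwise_sort p.parts (· ≤ ·)

lemma coe_descList {n : ℕ} (p : n.Partition) : (descList p : Multiset ℕ) = p.parts := by
  rw [descList, Multiset.coe_reverse, Multiset.sort_eq]

lemma mem_descList {n : ℕ} (p : n.Partition) {x : ℕ} : x ∈ descList p ↔ x ∈ p.parts := by
  rw [← coe_descList p, Multiset.mem_coe]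

lemma descList_pos {n : ℕ} (p : n.Partition) : ∀ x ∈ descList p, 0 < x := fun x hx =>
  p.parts_pos ((mem_descList p).1 hx)

lemma sum_descList {n : ℕ} (p : n.Partition) : (descList p).sum = n := by
  have := congrArg Multiset.sum (coe_descList p)
  rw [Multiset.sum_coe, p.parts_sum] at this
  exact this

lemma nthPart_eq_getD {n : ℕ} (p : n.Partition) (i : ℕ) :
    nthPart p i = (descList p).getD (i - 1) 0 := rfl

/-- A weakly decreasing list with the right multiset of entries must be `descList`. -/
lemma descList_unique {n : ℕ} (p : n.Partition) {L : List ℕ} (hL : L.Pairwise (· ≥ ·))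
    (h : (L : Multiset ℕ) = p.parts) : descList p = L := by
  have hperm : (descList p).Perm L := by
    rw [← Multiset.coe_eq_coe, coe_descList, h]
  exact List.Perm.eq_of_pairwise' (descList_sorted p) hL hperm

/-! ### Conjugation of partitions via Young diagrams -/

/-- The Young diagram of a partition. -/
def yd {n : ℕ} (p : n.Partition) : YoungDiagram :=
  YoungDiagram.ofRowLens (descList p) (descList_sorted p).sortedGE

lemma rowLens_yd {n : ℕ} (p : n.Partition) : (yd p).rowLens = descList p :=
  YoungDiagram.rowLens_ofRowLens_eq_self (descList_pos p)

lemma card_yd {n : ℕ} (p : n.Partition) : (yd p).cells.card = n := by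
  rw [← sum_rowLens_eq_card, rowLens_yd, sum_descList]

lemma mem_yd {n : ℕ} (p : n.Partition) {c : ℕ × ℕ} :
    c ∈ yd p ↔ ∃ h : c.1 < (descList p).length, c.2 < (descList p)[c.1] :=
  YoungDiagram.mem_ofRowLens

lemma rowLen_yd {n : ℕ} (p : n.Partition) {i : ℕ} (h : i < (descList p).length) :
    (yd p).rowLen i = (descList p)[i] :=
  YoungDiagram.rowLen_ofRowLens (w := descList p) (hw := (descList_sorted p).sortedGE) ⟨i, h⟩

lemma yd_injective {n : ℕ} : Function.Injective (yd (n := n)) := by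
  intro p q h
  have h2 : descList p = descList q := by rw [← rowLens_yd p, ← rowLens_yd q, h]
  have h3 : p.parts = q.parts := by rw [← coe_descList p, ← coe_descList q, h2]
  cases p; cases q; simpa using h3

/-- The conjugate of a partition. -/
def conj {n : ℕ} (p : n.Partition) : n.Partition where
  parts := ↑((yd p).transpose.rowLens)
  parts_pos := fun hx => YoungDiagram.pos_of_mem_rowLens _ _ (Multiset.mem_coe.1 hx)
  parts_sum := by
    rw [Multiset.sum_coe, sum_rowLens_eq_card, card_transpose, card_yd]

lemma descList_conj {n : ℕ} (p : n.Partition) :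
    descList (conj p) = (yd p).transpose.rowLens :=
  descList_unique _ ((yd p).transpose.rowLens_sorted.pairwise) rfl

lemma conj_injective {n : ℕ} : Function.Injective (conj (n := n)) := by
  intro p q h
  have h1 : (yd p).transpose.rowLens = (yd q).transpose.rowLens := by
    rw [← descList_conj, ← descList_conj, h]
  have h2 : (yd p).transpose = (yd q).transpose :=
    YoungDiagram.equivListRowLens.injective (Subtype.ext (by simpa using h1))
  exact yd_injective (YoungDiagram.transpose_eq_iff.1 h2)

/-! ### Smallest part -/

/-- The smallest part of a partition (junk value `0` for the empty partition). -/
def minP {n : ℕ} (p : n.Partition) : ℕ :=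
  (p.parts.sort (· ≤ ·)).headD 0

lemma minP_mem {n : ℕ} (p : n.Partition) (hne : p.parts ≠ 0) : minP p ∈ p.parts := by
  have h : p.parts.sort (· ≤ ·) ≠ [] := by
    intro h0
    apply hne
    rw [← Multiset.sort_eq p.parts (· ≤ ·), h0]; rfl
  obtain ⟨a, l, hl⟩ := List.exists_cons_of_ne_nil h
  have : minP p ∈ p.parts.sort (· ≤ ·) := by rw [minP, hl]; exact List.mem_cons_self
  rwa [Multiset.mem_sort] at this

lemma minP_le {n : ℕ} (p : n.Partition) {x : ℕ} (hx : x ∈ p.parts) : minP p ≤ x := by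
  have hs := Multiset.pairwise_sort p.parts (· ≤ ·)
  have hx' : x ∈ p.parts.sort (· ≤ ·) := by rwa [Multiset.mem_sort]
  obtain ⟨a, l, hl⟩ := List.exists_cons_of_ne_nil (List.ne_nil_of_mem hx')
  rw [hl] at hs hx'
  rw [minP, hl, List.headD_cons]
  rcases List.mem_cons.1 hx' with rfl | hmem
  · exact le_rfl
  · exact (List.pairwise_cons.1 hs).1 x hmem

/-! ### The injection -/

/-- Remove one box from the smallest part of `β` (a partition of `k` with all parts `≥ 3`),
yielding a partition of `k - 1` all of whose parts are `≥ 2`. -/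
def removeBox {k : ℕ} (hk : 3 ≤ k) (β : k.Partition) (h : ∀ p ∈ β.parts, 3 ≤ p) :
    (k - 1).Partition where
  parts := (minP β - 1) ::ₘ β.parts.erase (minP β)
  parts_pos := by
    intro x hx
    rcases Multiset.mem_cons.1 hx with rfl | hmem
    · have := h _ (minP_mem β (by
        intro h0
        have := β.parts_sum
        rw [h0] at this
        simp at this
        omega))
      omega
    · exact β.parts_pos (Multiset.mem_of_mem_erase hmem)
  parts_sum := by
    have hne : β.parts ≠ 0 := by
      intro h0
      have := β.parts_sum
      rw [h0] at this
      simp at this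
      omega
    have hmem := minP_mem β hne
    have h3 : 3 ≤ minP β := h _ hmem
    have hsum : minP β + (β.parts.erase (minP β)).sum = k := by
      rw [← Multiset.sum_cons, Multiset.cons_erase hmem, β.parts_sum]
    rw [Multiset.sum_cons]
    omega

lemma removeBox_parts_two_le {k : ℕ} (hk : 3 ≤ k) (β : k.Partition)
    (h : ∀ p ∈ β.parts, 3 ≤ p) : ∀ x ∈ (removeBox hk β h).parts, 2 ≤ x := by
  intro x hx
  rcases Multiset.mem_cons.1 hx with rfl | hmem
  · have hne : β.parts ≠ 0 := by
      intro h0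
      have := β.parts_sum
      rw [h0] at this
      simp at this
      omega
    have := h _ (minP_mem β hne)
    omega
  · have := h _ (Multiset.mem_of_mem_erase hmem)
    omega

open scoped Classical in
/-- The injection: remove one box from the smallest part, then conjugate. -/
noncomputable def F {k : ℕ} (hk : 3 ≤ k) (β : k.Partition) : (k - 1).Partition :=
  if h : ∀ p ∈ β.parts, 3 ≤ p then conj (removeBox hk β h)
  else Nat.Partition.indiscrete (k - 1)

lemma removeBox_injective {k : ℕ} (hk : 3 ≤ k) (β β' : k.Partition)
    (h : ∀ p ∈ β.parts, 3 ≤ p) (h' : ∀ p ∈ β'.parts, 3 ≤ p)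
    (heq : removeBox hk β h = removeBox hk β' h') : β = β' := by
  have hne : β.parts ≠ 0 := by
    intro h0; have := β.parts_sum; rw [h0] at this; simp at this; omega
  have hne' : β'.parts ≠ 0 := by
    intro h0; have := β'.parts_sum; rw [h0] at this; simp at this; omega
  have hmem := minP_mem β hne
  have hmem' := minP_mem β' hne'
  have h3 : 3 ≤ minP β := h _ hmem
  have h3' : 3 ≤ minP β' := h' _ hmem'
  have hparts : (minP β - 1) ::ₘ β.parts.erase (minP β)
      = (minP β' - 1) ::ₘ β'.parts.erase (minP β') := congrArg Nat.Partition.parts heq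
  -- `minP β - 1` is the least element of the common multiset; hence minP β = minP β'
  have hminle : ∀ x ∈ (minP β - 1) ::ₘ β.parts.erase (minP β), minP β - 1 ≤ x := by
    intro x hx
    rcases Multiset.mem_cons.1 hx with rfl | hmem2
    · exact le_rfl
    · have := minP_le β (Multiset.mem_of_mem_erase hmem2); omega
  have hminle' : ∀ x ∈ (minP β' - 1) ::ₘ β'.parts.erase (minP β'), minP β' - 1 ≤ x := by
    intro x hx
    rcases Multiset.mem_cons.1 hx with rfl | hmem2
    · exact le_rfl
    · have := minP_le β' (Multiset.mem_of_mem_erase hmem2); omega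
  have hle1 : minP β' - 1 ≤ minP β - 1 := by
    apply hminle'
    rw [← hparts]
    exact Multiset.mem_cons_self _ _
  have hle2 : minP β - 1 ≤ minP β' - 1 := by
    apply hminle
    rw [hparts]
    exact Multiset.mem_cons_self _ _
  have hm : minP β = minP β' := by omega
  have : β.parts = β'.parts := by
    have e1 : β.parts = minP β ::ₘ β.parts.erase (minP β) := (Multiset.cons_erase hmem).symm
    have e2 : β'.parts = minP β' ::ₘ β'.parts.erase (minP β') := (Multiset.cons_erase hmem').symm
    have e3 : β.parts.erase (minP β) = β'.parts.erase (minP β') := by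
      have := congrArg (Multiset.erase · (minP β - 1)) hparts
      simpa [hm] using this
    rw [e1, e2, e3, hm]
  cases β; cases β'; simpa using this

/-- The image of the injection has equal first and second parts. -/
lemma nthPart_F {k : ℕ} (hk : 3 ≤ k) (β : k.Partition) (h : ∀ p ∈ β.parts, 3 ≤ p) :
    nthPart (F hk β) 1 = nthPart (F hk β) 2 := by
  classical
  rw [F, dif_pos h]
  set γ := removeBox hk β h with hγ
  have h2 : ∀ x ∈ descList γ, 2 ≤ x := fun x hx =>
    removeBox_parts_two_le hk β h x ((mem_descList γ).1 hx)
  set μ := yd γ with hμ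
  -- the descending list of `conj γ` is the row-lengths list of the transpose
  have hdl : descList (conj γ) = μ.transpose.rowLens := descList_conj γ
  -- every nonzero row of μ has length ≥ 2
  have hrow2 : ∀ i, (i, 0) ∈ μ → 2 ≤ μ.rowLen i := by
    intro i hi
    rw [hμ] at hi ⊢
    obtain ⟨hilen, -⟩ := (mem_yd γ).1 hi
    rw [rowLen_yd γ hilen]
    exact h2 _ (List.getElem_mem hilen)
  -- γ is nonempty, so μ has a first row, of length ≥ 2
  have hγne : γ.parts ≠ 0 := by
    intro h0
    have := γ.parts_sum
    rw [h0] at this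
    simp at this
    omega
  have hdlne : descList γ ≠ [] := by
    intro h0
    apply hγne
    rw [← coe_descList γ, h0]; rfl
  have hlen0 : 0 < (descList γ).length := List.length_pos_iff.2 hdlne
  have hrow0 : 2 ≤ μ.rowLen 0 := by
    apply hrow2
    rw [hμ, mem_yd]
    exact ⟨hlen0, Nat.lt_of_lt_of_le Nat.zero_lt_two (h2 _ (List.getElem_mem hlen0))⟩
  -- colLen 0 = colLen 1 for μ
  have hcol : μ.colLen 0 = μ.colLen 1 := by
    refine le_antisymm ?_ (μ.colLen_anti 0 1 (by omega))
    by_contra hlt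
    push_neg at hlt
    have hmem0 : (μ.colLen 1, 0) ∈ μ := YoungDiagram.mem_iff_lt_colLen.2 hlt
    have : (μ.colLen 1, 1) ∈ μ := by
      rw [YoungDiagram.mem_iff_lt_rowLen]
      have := hrow2 _ hmem0
      omega
    rw [YoungDiagram.mem_iff_lt_colLen] at this
    omega
  -- length of the transpose's rowLens list is μ.rowLen 0 ≥ 2
  have hlenT : (μ.transpose.rowLens).length = μ.rowLen 0 := by
    rw [YoungDiagram.length_rowLens, YoungDiagram.colLen_transpose]
  have hlenT2 : 2 ≤ (μ.transpose.rowLens).length := by omega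
  have key : ∀ i : ℕ, (hi : i < (μ.transpose.rowLens).length) →
      nthPart (conj γ) (i + 1) = μ.colLen i := by
    intro i hi
    rw [nthPart_eq_getD, hdl]
    simp only [Nat.add_sub_cancel]
    rw [List.getD_eq_getElem?_getD, List.getElem?_eq_getElem hi, Option.getD_some]
    rw [YoungDiagram.get_rowLens, YoungDiagram.rowLen_transpose]
  have k1 := key 0 (by omega)
  have k2 := key 1 (by omega)
  norm_num at k1 k2
  rw [k1, k2, hcol]

/-- For every integer `k ≥ 3`, `f k` is at most the number of partitions `α` of `k - 1`
satisfying `α₁ = α₂`. -/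
theorem f_le_card_firstTwoPartsEq (k : ℕ) (hk : 3 ≤ k) :
    f k ≤ (Finset.univ.filter
      (fun α : (k - 1).Partition => nthPart α 1 = nthPart α 2)).card := by
  classical
  rw [f]
  apply Finset.card_le_card_of_injOn (F hk)
  · intro β hβ
    rw [Finset.mem_coe, Finset.mem_filter] at hβ ⊢
    exact ⟨Finset.mem_univ _, nthPart_F hk β hβ.2⟩
  · intro β hβ β' hβ' heq
    rw [Finset.coe_filter] at hβ hβ'
    simp only [Set.mem_setOf_eq] at hβ hβ'
    rw [F, F, dif_pos hβ.2, dif_pos hβ'.2] at heq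
    exact removeBox_injective hk β β' hβ.2 hβ'.2 (conj_injective heq)

end SquareKronecker
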